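/- Suppose M is essentially finitary over a class C (there is a dense morphism of monads ρ : M° ⇒ M with M° finitary, dense over the closure of C under binary products). If a language K ⊆ M_ξ Σ is recognised by a morphism φ : M Σ → A with A ∈ C, then the syntactic congruence ≼_K is a congruence ordering on M Σ; in particular K has a syntactic algebra when A is finitary. -/

import Mathlib

/-- An object of `Pos`: a type equipped with a partial order. -/
structure Pos : Type 1 where
  car : Type
  po : PartialOrder car

attribute [instance] Pos.po

/-- Monotone maps between objects of `Pos`. -/
structure PHom (A B : Pos) where
  f : A.car → B.car
  mono : Monotone f

def PHom.id (A : Pos) : PHom A A := ⟨fun a => a, fun _ _ h => h⟩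

def PHom.comp {A B C : Pos} (g : PHom B C) (f : PHom A B) : PHom A C :=
  ⟨fun a => g.f (f.f a), fun _ _ h => g.mono (f.mono h)⟩

/-- A monad on the category `Pos` of partially ordered sets and monotone maps. -/
structure OMonad : Type 1 where
  obj : Pos → Pos
  map : {A B : Pos} → PHom A B → PHom (obj A) (obj B)
  map_id : ∀ A : Pos, map (PHom.id A) = PHom.id (obj A)
  map_comp : ∀ {A B C : Pos} (f : PHom A B) (g : PHom B C),
      map (g.comp f) = (map g).comp (map f)
  sing : ∀ A : Pos, PHom A (obj A)
  flat : ∀ A : Pos, PHom (obj (obj A)) (obj A)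
  sing_nat : ∀ {A B : Pos} (f : PHom A B), (map f).comp (sing A) = (sing B).comp f
  flat_nat : ∀ {A B : Pos} (f : PHom A B),
      (map f).comp (flat A) = (flat B).comp (map (map f))
  flat_sing : ∀ A, (flat A).comp (sing (obj A)) = PHom.id (obj A)
  flat_map_sing : ∀ A, (flat A).comp (map (sing A)) = PHom.id (obj A)
  flat_assoc : ∀ A, (flat A).comp (flat (obj A)) = (flat A).comp (map (flat A))

/-- An Eilenberg–Moore algebra for the monad `M`. -/
structure OAlg (M : OMonad) where
  A : Pos
  pi : PHom (M.obj A) A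
  unit_law : pi.comp (M.sing A) = PHom.id A
  assoc_law : pi.comp (M.map pi) = pi.comp (M.flat A)

/-- A morphism of Eilenberg–Moore algebras. -/
structure OAlgHom {M : OMonad} (X Y : OAlg M) where
  h : PHom X.A Y.A
  comm : h.comp X.pi = Y.pi.comp (M.map h)

def OAlgHom.comp {M : OMonad} {X Y Z : OAlg M} (g : OAlgHom Y Z) (f : OAlgHom X Y) :
    OAlgHom X Z :=
  ⟨g.h.comp f.h, by
    calc (g.h.comp f.h).comp X.pi = g.h.comp (f.h.comp X.pi) := rfl
      _ = g.h.comp (Y.pi.comp (M.map f.h)) := by rw [f.comm]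
      _ = (g.h.comp Y.pi).comp (M.map f.h) := rfl
      _ = (Z.pi.comp (M.map g.h)).comp (M.map f.h) := by rw [g.comm]
      _ = Z.pi.comp ((M.map g.h).comp (M.map f.h)) := rfl
      _ = Z.pi.comp (M.map (g.h.comp f.h)) := by rw [← M.map_comp]⟩

/-- The free `M`-algebra over `A`, carried by `M A` with product `flat`. -/
def OMonad.free (M : OMonad) (A : Pos) : OAlg M :=
  ⟨M.obj A, M.flat A, M.flat_sing A, (M.flat_assoc A).symm⟩

/- Sub-posets, products, relations as sub-posets of products. -/

def Pos.sub (A : Pos) (S : Set A.car) : Pos := ⟨{a : A.car // a ∈ S}, inferInstance⟩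

def subIncl (A : Pos) (S : Set A.car) : PHom (A.sub S) A := ⟨fun a => a.val, fun _ _ h => h⟩

def Pos.prod (A B : Pos) : Pos := ⟨A.car × B.car, inferInstance⟩

def prodFst (A B : Pos) : PHom (A.prod B) A := ⟨Prod.fst, fun _ _ h => h.1⟩
def prodSnd (A B : Pos) : PHom (A.prod B) B := ⟨Prod.snd, fun _ _ h => h.2⟩

/-- A relation `r` on `A`, as a sub-poset of `A × A`. -/
def relPos (A : Pos) (r : A.car → A.car → Prop) : Pos :=
  ⟨{p : A.car × A.car // r p.1 p.2}, inferInstance⟩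

def relFst (A : Pos) (r : A.car → A.car → Prop) : PHom (relPos A r) A :=
  ⟨fun p => p.val.1, fun _ _ h => h.1⟩
def relSnd (A : Pos) (r : A.car → A.car → Prop) : PHom (relPos A r) A :=
  ⟨fun p => p.val.2, fun _ _ h => h.2⟩

/- The standing convention on the monad `M`. -/

def PreservesInj (M : OMonad) : Prop :=
  ∀ {A B : Pos} (f : PHom A B), Function.Injective f.f → Function.Injective (M.map f).f
def PreservesSurj (M : OMonad) : Prop :=
  ∀ {A B : Pos} (f : PHom A B), Function.Surjective f.f → Function.Surjective (M.map f).f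
def PreservesBij (M : OMonad) : Prop :=
  ∀ {A B : Pos} (f : PHom A B), Function.Bijective f.f → Function.Bijective (M.map f).f
def PreservesPre (M : OMonad) : Prop :=
  ∀ {A B : Pos} (f : PHom A B) (S : Set B.car),
    Set.range (M.map (subIncl A (f.f ⁻¹' S))).f
      = (M.map f).f ⁻¹' Set.range (M.map (subIncl B S)).f

/-- `M` uses the standard ordering: the order on `M A` is the lift of the order on `A`. -/
def UsesStdOrder (M : OMonad) : Prop :=
  ∀ (A : Pos) (s t : (M.obj A).car),
    s ≤ t ↔ ∃ u : (M.obj (relPos A (fun a b => a ≤ b))).car,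
      (M.map (relFst A (fun a b => a ≤ b))).f u = s ∧
      (M.map (relSnd A (fun a b => a ≤ b))).f u = t

/-- The standing convention of the paper. -/
def Convention (M : OMonad) : Prop :=
  PreservesInj M ∧ PreservesSurj M ∧ PreservesBij M ∧ PreservesPre M ∧ UsesStdOrder M

/- Quotients by preorders containing the order. -/

/-- A preorder on (the carrier of) `A` containing the partial order of `A`. -/
structure PreCong (A : Pos) where
  r : A.car → A.car → Prop
  refl : ∀ a, r a a
  trans : ∀ a b c, r a b → r b c → r a c
  le_sub : ∀ a b : A.car, a ≤ b → r a b

def PreCong.setoid {A : Pos} (co : PreCong A) : Setoid A.car where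
  r a b := co.r a b ∧ co.r b a
  iseqv := ⟨fun a => ⟨co.refl a, co.refl a⟩, fun h => ⟨h.2, h.1⟩,
    fun h1 h2 => ⟨co.trans _ _ _ h1.1 h2.1, co.trans _ _ _ h2.2 h1.2⟩⟩

/-- The quotient poset `A/⊑`. -/
def quotPos {A : Pos} (co : PreCong A) : Pos where
  car := Quotient co.setoid
  po :=
    { le := Quotient.lift₂ co.r (fun a b a' b' ha hb => propext
        ⟨fun h => co.trans _ _ _ ha.2 (co.trans _ _ _ h hb.1),
         fun h => co.trans _ _ _ ha.1 (co.trans _ _ _ h hb.2)⟩)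
      le_refl := fun q => Quotient.inductionOn q co.refl
      lt := fun (x y : Quotient co.setoid) =>
        Quotient.lift₂ (s₁ := co.setoid) (s₂ := co.setoid) co.r (fun a b a' b' ha hb => propext
          ⟨fun h => co.trans _ _ _ ha.2 (co.trans _ _ _ h hb.1),
           fun h => co.trans _ _ _ ha.1 (co.trans _ _ _ h hb.2)⟩) x y ∧
        ¬ Quotient.lift₂ (s₁ := co.setoid) (s₂ := co.setoid) co.r (fun a b a' b' ha hb => propext
          ⟨fun h => co.trans _ _ _ ha.2 (co.trans _ _ _ h hb.1),
           fun h => co.trans _ _ _ ha.1 (co.trans _ _ _ h hb.2)⟩) y x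
      lt_iff_le_not_ge := fun _ _ => Iff.rfl
      le_trans := by
        intro q1 q2 q3
        refine Quotient.inductionOn₃ q1 q2 q3 ?_
        intro a b d h1 h2
        exact co.trans a b d h1 h2
      le_antisymm := by
        intro q1 q2
        refine Quotient.inductionOn₂ q1 q2 ?_
        intro a b h1 h2
        exact Quotient.sound ⟨h1, h2⟩ }

/-- The quotient map `A → A/⊑`. -/
def quotHom {A : Pos} (co : PreCong A) : PHom A (quotPos co) :=
  ⟨fun a => Quotient.mk co.setoid a, fun a b h => co.le_sub a b h⟩

/-- `⊑` is a congruence ordering on the algebra `X`: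
`s ⊑_M t` (i.e. `M q (s) ≤ M q (t)`) implies `π(s) ⊑ π(t)`. -/
def IsCongOrdP (M : OMonad) (X : OAlg M) (co : PreCong X.A) : Prop :=
  ∀ s t : (M.obj X.A).car,
    (M.map (quotHom co)).f s ≤ (M.map (quotHom co)).f t → co.r (X.pi.f s) (X.pi.f t)

/-- The relation `r` is a congruence ordering on the algebra `X`. -/
def IsCongruenceOrdering (M : OMonad) (X : OAlg M) (r : X.A.car → X.A.car → Prop) : Prop :=
  ∃ (h1 : ∀ a, r a a) (h2 : ∀ a b c, r a b → r b c → r a c)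
    (h3 : ∀ a b : X.A.car, a ≤ b → r a b),
    IsCongOrdP M X ⟨r, h1, h2, h3⟩

/- Contexts and syntactic congruences. -/

/-- `A + □`: the poset `A` extended by a single extra point `□`. -/
def Pos.addBox (A : Pos) : Pos := ⟨A.car ⊕ PUnit, inferInstance⟩

/-- The map `A + □ → A` substituting `a` for `□`. -/
def substHom (M : OMonad) (X : OAlg M) (a : X.A.car) : PHom X.A.addBox X.A :=
  ⟨fun z => Sum.elim (fun x => x) (fun _ => a) z, by
    intro x y h
    cases h with
    | inl h => exact h
    | inr h => exact le_refl a⟩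

/-- Evaluation `p[a]` of a context `p ∈ M(A + □)` at `a ∈ A`. -/
def ctxEval (M : OMonad) (X : OAlg M) (p : (M.obj X.A.addBox).car) (a : X.A.car) : X.A.car :=
  X.pi.f ((M.map (substHom M X a)).f p)

/-- The syntactic congruence `a ≼_K b` of a set `K`. -/
def synLe (M : OMonad) (X : OAlg M) (K : Set X.A.car) (a b : X.A.car) : Prop :=
  ∀ p : (M.obj X.A.addBox).car, ctxEval M X p a ∈ K → ctxEval M X p b ∈ K

def UpClosed (A : Pos) (K : Set A.car) : Prop :=
  ∀ a b : A.car, a ∈ K → a ≤ b → b ∈ K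

/-- The derivative `p⁻¹[K]` of `K` by the context `p`. -/
def ctxDeriv (M : OMonad) (X : OAlg M) (p : (M.obj X.A.addBox).car) (K : Set X.A.car) :
    Set X.A.car :=
  {a | ctxEval M X p a ∈ K}

/-- `A` carries the trivial (discrete) order. -/
def TrivOrder (A : Pos) : Prop := ∀ a b : A.car, a ≤ b → a = b

/-- A morphism from a free algebra recognises a language `K` if `K` is the preimage of
an upwards closed set. -/
def Recognises {M : OMonad} {Sg : Pos} {X : OAlg M} (φ : OAlgHom (M.free Sg) X)
    (K : Set ((M.obj Sg).car)) : Prop :=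
  ∃ P : Set X.A.car, UpClosed X.A P ∧ K = φ.h.f ⁻¹' P

/-- Embedding of `Σ + □` into `(M Σ) + □` via `sing`, used to view contexts over the
alphabet as contexts over the free algebra. -/
def singBox (M : OMonad) (Sg : Pos) : PHom Sg.addBox (M.obj Sg).addBox :=
  ⟨Sum.map (M.sing Sg).f (fun x => x), by
    intro x y h
    cases h with
    | inl h => exact Sum.LiftRel.inl ((M.sing Sg).mono h)
    | inr h => exact Sum.LiftRel.inr h⟩

/-- Evaluation of a context `p ∈ M(Σ + □)` at an element `s ∈ M Σ` of the free algebra. -/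
def freeCtxEval (M : OMonad) (Sg : Pos) (p : (M.obj Sg.addBox).car) (s : (M.obj Sg).car) :
    (M.obj Sg).car :=
  ctxEval M (M.free Sg) ((M.map (singBox M Sg)).f p) s

/- Finitary monads and algebras. -/

/-- `M` is finitary: it preserves directed unions. -/
def FinitaryM (M : OMonad) : Prop :=
  ∀ (A : Pos) (ι : Type) (D : ι → Set A.car), Directed (· ⊆ ·) D → (⋃ i, D i) = Set.univ →
    ∀ s : (M.obj A).car, ∃ i, ∃ s₀ : (M.obj (A.sub (D i))).car,
      (M.map (subIncl A (D i))).f s₀ = s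

/-- A finitary algebra: (sort-wise) finite universe and finitely generated. -/
def FinitaryAlg (M : OMonad) (X : OAlg M) : Prop :=
  Finite X.A.car ∧ ∃ C : Set X.A.car, C.Finite ∧
    ∀ a : X.A.car, ∃ s : (M.obj (X.A.sub C)).car, a = X.pi.f ((M.map (subIncl X.A C)).f s)
/-- A morphism of monads `M₀ ⇒ M₁`. -/
structure OMonadHom (M₀ M₁ : OMonad) where
  app : ∀ A : Pos, PHom (M₀.obj A) (M₁.obj A)
  naturality : ∀ {A B : Pos} (f : PHom A B),
      (app B).comp (M₀.map f) = (M₁.map f).comp (app A)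
  sing_comm : ∀ A : Pos, (app A).comp (M₀.sing A) = M₁.sing A
  flat_comm : ∀ A : Pos,
      (app A).comp (M₀.flat A)
        = (M₁.flat A).comp ((app (M₁.obj A)).comp (M₀.map (app A)))

/-- The `ρ`-reduct of an `M₁`-algebra: the `M₀`-algebra with product `π ∘ ρ`. -/
def OMonadHom.reduct {M₀ M₁ : OMonad} (ρ : OMonadHom M₀ M₁) (X : OAlg M₁) : OAlg M₀ where
  A := X.A
  pi := X.pi.comp (ρ.app X.A)
  unit_law := by
    calc (X.pi.comp (ρ.app X.A)).comp (M₀.sing X.A)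
        = X.pi.comp ((ρ.app X.A).comp (M₀.sing X.A)) := rfl
      _ = X.pi.comp (M₁.sing X.A) := by rw [ρ.sing_comm]
      _ = PHom.id X.A := X.unit_law
  assoc_law := by
    have hnat := ρ.naturality (X.pi.comp (ρ.app X.A))
    have hint := ρ.naturality (ρ.app X.A)
    calc (X.pi.comp (ρ.app X.A)).comp (M₀.map (X.pi.comp (ρ.app X.A)))
        = X.pi.comp ((ρ.app X.A).comp (M₀.map (X.pi.comp (ρ.app X.A)))) := rfl
      _ = X.pi.comp ((M₁.map (X.pi.comp (ρ.app X.A))).comp (ρ.app (M₀.obj X.A))) := by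
            rw [hnat]
      _ = (X.pi.comp (M₁.map (X.pi.comp (ρ.app X.A)))).comp (ρ.app (M₀.obj X.A)) := rfl
      _ = (X.pi.comp ((M₁.map X.pi).comp (M₁.map (ρ.app X.A)))).comp (ρ.app (M₀.obj X.A)) := by
            rw [M₁.map_comp]
      _ = ((X.pi.comp (M₁.map X.pi)).comp (M₁.map (ρ.app X.A))).comp (ρ.app (M₀.obj X.A)) := rfl
      _ = ((X.pi.comp (M₁.flat X.A)).comp (M₁.map (ρ.app X.A))).comp (ρ.app (M₀.obj X.A)) := by
            rw [X.assoc_law]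
      _ = X.pi.comp ((M₁.flat X.A).comp ((M₁.map (ρ.app X.A)).comp (ρ.app (M₀.obj X.A)))) := rfl
      _ = X.pi.comp ((M₁.flat X.A).comp ((ρ.app (M₁.obj X.A)).comp (M₀.map (ρ.app X.A)))) := by
            rw [hint]
      _ = X.pi.comp ((ρ.app X.A).comp (M₀.flat X.A)) := by rw [← ρ.flat_comm]
      _ = (X.pi.comp (ρ.app X.A)).comp (M₀.flat X.A) := rfl

/-- `ρ : M₀ ⇒ M₁` is dense over the class `C`. -/
def DenseOver {M₀ M₁ : OMonad} (ρ : OMonadHom M₀ M₁) (C : Set (OAlg M₁)) : Prop :=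
  ∀ X ∈ C, ∀ (S : Set X.A.car) (s : (M₁.obj (X.A.sub S)).car),
    ∃ s₀ : (M₀.obj (X.A.sub S)).car,
      X.pi.f ((ρ.app X.A).f ((M₀.map (subIncl X.A S)).f s₀))
        = X.pi.f ((M₁.map (subIncl X.A S)).f s)

/-- `P` is a binary product of `A` and `B` in the category of `M`-algebras
(concretely: the projections induce an order isomorphism with the product poset). -/
def IsBinProd (M : OMonad) (P A B : OAlg M) : Prop :=
  ∃ (pa : OAlgHom P A) (pb : OAlgHom P B),
    Function.Bijective (fun x => (pa.h.f x, pb.h.f x)) ∧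
    ∀ x y : P.A.car, x ≤ y ↔ (pa.h.f x ≤ pa.h.f y ∧ pb.h.f x ≤ pb.h.f y)

/-- Closure of a class of algebras under binary products. -/
inductive InProdClosure (M : OMonad) (C : Set (OAlg M)) : OAlg M → Prop
  | base : ∀ A ∈ C, InProdClosure M C A
  | prod : ∀ A B P, InProdClosure M C A → InProdClosure M C B →
      IsBinProd M P A B → InProdClosure M C P

/-- `P` is a product of the family `A` of `M`-algebras. -/
def IsProdOf (M : OMonad) (P : OAlg M) {I : Type} (A : I → OAlg M) : Prop :=
  ∃ p : ∀ i, OAlgHom P (A i),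
    Function.Bijective (fun (x : P.A.car) (i : I) => (p i).h.f x) ∧
    ∀ x y : P.A.car, x ≤ y ↔ ∀ i, (p i).h.f x ≤ (p i).h.f y

/-- `B` is a quotient of `A`. -/
def IsQuotientOf (M : OMonad) (B A : OAlg M) : Prop :=
  ∃ φ : OAlgHom A B, Function.Surjective φ.h.f

/-- `B` is a subalgebra of `A` (an order embedding which is a morphism). -/
def IsSubalgebraOf (M : OMonad) (B A : OAlg M) : Prop :=
  ∃ φ : OAlgHom B A, ∀ x y : B.A.car, φ.h.f x ≤ φ.h.f y ↔ x ≤ y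

/-- A pseudo-variety (here with a single sort): a class of finitary algebras closed
under quotients, finitary subalgebras of finite products, and (the single-sorted
instance of) sort-accumulation points. -/
def PseudoVariety (M : OMonad) (V : Set (OAlg M)) : Prop :=
  (∀ X ∈ V, FinitaryAlg M X) ∧
  (∀ A ∈ V, ∀ B, IsQuotientOf M B A → B ∈ V) ∧
  (∀ (n : ℕ) (A : Fin n → OAlg M), (∀ i, A i ∈ V) →
    ∀ P, IsProdOf M P A → ∀ B, FinitaryAlg M B → IsSubalgebraOf M B P → B ∈ V) ∧
  (∀ B, FinitaryAlg M B → (∃ A ∈ V, IsQuotientOf M A B) → B ∈ V)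

/-- The inclusion of a relation, as a sub-poset, into the product poset. -/
def relIncl (A : Pos) (r : A.car → A.car → Prop) : PHom (relPos A r) (A.prod A) :=
  ⟨fun p => p.val, fun _ _ h => h⟩


/-!
Let `φ : Y → X` recognise `K = φ⁻¹ P`. An operation of `Y` applied to `≼_K`-related pairs
is sent by `φ × φ` into the subalgebra of `X × X` generated by the images of these pairs.
Density of `ρ` at `X × X` and finitariness of `M₀` rewrite its value as a term in finitely many
such pairs, and replacing the arguments of that term one at a time, each time through a context,
shows that membership in `K` is preserved. Absorbing an arbitrary context into the operation
upgrades this to closure of `≼_K` under all operations. To pass from `M(Y/≼_K)` back to `M Y`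
we lift along the surjection `≼_K → ≤` and choose representatives, which is monotone because
`Y = M Σ` is discrete. When `X` is finite, `φ a = φ b` already forces `a ≼_K b`, so `≼_K` has
finitely many classes.
-/

@[ext]
theorem PHom.ext {A B : Pos} {f g : PHom A B} (h : ∀ x, f.f x = g.f x) : f = g := by
  obtain ⟨f, _⟩ := f
  obtain ⟨g, _⟩ := g
  obtain rfl : f = g := funext h
  rfl

theorem PHom.congr_f {A B : Pos} {f g : PHom A B} (h : f = g) (x : A.car) : f.f x = g.f x := by
  rw [h]

def PHom.pair {A B C : Pos} (f : PHom A B) (g : PHom A C) : PHom A (B.prod C) :=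
  ⟨fun a => (f.f a, g.f a), fun _ _ h => ⟨f.mono h, g.mono h⟩⟩

def PHom.ofTrivOrder {A B : Pos} (hA : TrivOrder A) (f : A.car → B.car) : PHom A B :=
  ⟨f, fun a b h => by rw [hA a b h]⟩

def Pos.discrete (α : Type) : Pos :=
  ⟨α, { le := Eq, le_refl := Eq.refl, le_trans := fun _ _ _ => Eq.trans,
        le_antisymm := fun _ _ h _ => h }⟩

def PHom.ofDiscrete {α : Type} {B : Pos} (f : α → B.car) : PHom (Pos.discrete α) B :=
  ⟨f, fun a b (h : a = b) => by rw [h]⟩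

namespace OMonad

variable (M : OMonad)

theorem map_comp_apply {A B C : Pos} (f : PHom A B) (g : PHom B C) (x : (M.obj A).car) :
    (M.map (g.comp f)).f x = (M.map g).f ((M.map f).f x) :=
  PHom.congr_f (M.map_comp f g) x

theorem map_id_apply {A : Pos} (x : (M.obj A).car) : (M.map (PHom.id A)).f x = x :=
  PHom.congr_f (M.map_id A) x

theorem map_sing_apply {A B : Pos} (f : PHom A B) (a : A.car) :
    (M.map f).f ((M.sing A).f a) = (M.sing B).f (f.f a) :=
  PHom.congr_f (M.sing_nat f) a

theorem map_flat_apply {A B : Pos} (f : PHom A B) (x : (M.obj (M.obj A)).car) :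
    (M.map f).f ((M.flat A).f x) = (M.flat B).f ((M.map (M.map f)).f x) :=
  PHom.congr_f (M.flat_nat f) x

end OMonad

theorem OMonad.trivOrder_obj {M : OMonad} (hstd : UsesStdOrder M) {A : Pos} (hA : TrivOrder A) :
    TrivOrder (M.obj A) := by
  intro s t hst
  obtain ⟨u, rfl, rfl⟩ := (hstd A s t).mp hst
  rw [show relFst A _ = relSnd A _ from PHom.ext fun p => hA _ _ p.property]

theorem OMonadHom.app_map_apply {M₀ M : OMonad} (ρ : OMonadHom M₀ M) {A B : Pos} (f : PHom A B)
    (x : (M₀.obj A).car) : (ρ.app B).f ((M₀.map f).f x) = (M.map f).f ((ρ.app A).f x) :=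
  PHom.congr_f (ρ.naturality f) x

namespace OAlg

variable {M : OMonad} (X : OAlg M)

theorem pi_sing_apply (a : X.A.car) : X.pi.f ((M.sing X.A).f a) = a :=
  PHom.congr_f X.unit_law a

theorem pi_map_pi_apply (x : (M.obj (M.obj X.A)).car) :
    X.pi.f ((M.map X.pi).f x) = X.pi.f ((M.flat X.A).f x) :=
  PHom.congr_f X.assoc_law x

theorem apply_assoc_of_comp_eq {B : Pos} (β : PHom (M.obj B) B) (pr : PHom B X.A)
    (h : pr.comp β = X.pi.comp (M.map pr)) (x : (M.obj (M.obj B)).car) :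
    pr.f (β.f ((M.map β).f x)) = pr.f (β.f ((M.flat B).f x)) := by
  have hβ : ∀ y, pr.f (β.f y) = X.pi.f ((M.map pr).f y) := PHom.congr_f h
  rw [hβ, hβ, ← M.map_comp_apply, h, M.map_comp_apply, X.pi_map_pi_apply, ← M.map_flat_apply]

def prodPi (Y : OAlg M) : PHom (M.obj (X.A.prod Y.A)) (X.A.prod Y.A) :=
  (X.pi.comp (M.map (prodFst X.A Y.A))).pair (Y.pi.comp (M.map (prodSnd X.A Y.A)))

abbrev prod (Y : OAlg M) : OAlg M where
  A := X.A.prod Y.A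
  pi := X.prodPi Y
  unit_law := by
    ext a
    refine Prod.ext ?_ ?_
    · change X.pi.f ((M.map _).f ((M.sing _).f a)) = a.1
      rw [M.map_sing_apply, X.pi_sing_apply]; rfl
    · change Y.pi.f ((M.map _).f ((M.sing _).f a)) = a.2
      rw [M.map_sing_apply, Y.pi_sing_apply]; rfl
  assoc_law := by
    ext x
    refine Prod.ext ?_ ?_
    · exact X.apply_assoc_of_comp_eq (X.prodPi Y) (prodFst X.A Y.A) rfl x
    · exact Y.apply_assoc_of_comp_eq (X.prodPi Y) (prodSnd X.A Y.A) rfl x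

theorem prod_pi_map_pair (Y : OAlg M) {B : Pos} (f : PHom B X.A) (g : PHom B Y.A)
    (v : (M.obj B).car) :
    (X.prod Y).pi.f ((M.map (f.pair g)).f v)
      = (X.pi.f ((M.map f).f v), Y.pi.f ((M.map g).f v)) := by
  change (X.pi.f ((M.map _).f ((M.map (f.pair g)).f v)),
    Y.pi.f ((M.map _).f ((M.map (f.pair g)).f v))) = _
  rw [← M.map_comp_apply, ← M.map_comp_apply]
  rfl

theorem isBinProd_prod (Y : OAlg M) : IsBinProd M (X.prod Y) X Y :=
  ⟨⟨prodFst X.A Y.A, rfl⟩, ⟨prodSnd X.A Y.A, rfl⟩,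
    ⟨fun _ _ h => h, fun y => ⟨y, rfl⟩⟩, fun _ _ => Iff.rfl⟩

end OAlg

theorem OAlgHom.pi_map_comp {M : OMonad} {Y X : OAlg M} (φ : OAlgHom Y X) {B : Pos}
    (g : PHom B Y.A) (v : (M.obj B).car) :
    X.pi.f ((M.map (φ.h.comp g)).f v) = φ.h.f (Y.pi.f ((M.map g).f v)) := by
  rw [M.map_comp_apply]
  exact (PHom.congr_f φ.comm _).symm

theorem DenseOver.exists_finite_discrete_term {M₀ M : OMonad} {ρ : OMonadHom M₀ M}
    {C : Set (OAlg M)} (hdense : DenseOver ρ C) (hfin : FinitaryM M₀) (hsurj : PreservesSurj M)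
    {Z : OAlg M} (hZ : Z ∈ C) (S : Set Z.A.car) (s : (M.obj (Z.A.sub S)).car) :
    ∃ (ι : Type) (_ : Finite ι) (g : ι → Z.A.car) (w : (M.obj (Pos.discrete ι)).car),
      (∀ i, g i ∈ S) ∧
        Z.pi.f ((M.map (PHom.ofDiscrete g)).f w) = Z.pi.f ((M.map (subIncl Z.A S)).f s) := by
  classical
  obtain ⟨s₀, hs₀⟩ := hdense Z hZ S s
  have hdir : Directed (· ⊆ ·) (fun F : Finset (Z.A.sub S).car => (F : Set (Z.A.sub S).car)) :=
    fun F G => ⟨F ∪ G, Finset.coe_subset.2 Finset.subset_union_left,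
      Finset.coe_subset.2 Finset.subset_union_right⟩
  have hcov : (⋃ F : Finset (Z.A.sub S).car, (F : Set (Z.A.sub S).car)) = Set.univ :=
    Set.iUnion_eq_univ_iff.2 fun x => ⟨{x}, Finset.mem_singleton_self x⟩
  obtain ⟨F, W, rfl⟩ := hfin _ _ _ hdir hcov s₀
  let T := (Z.A.sub S).sub (F : Set (Z.A.sub S).car)
  obtain ⟨w, hw⟩ :=
    hsurj (PHom.ofDiscrete (α := T.car) (B := T) id) (fun z => ⟨z, rfl⟩) ((ρ.app T).f W)
  refine ⟨T.car, inferInstanceAs (Finite (F : Set (Z.A.sub S).car)),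
    fun z : T.car => z.val.val, w, fun z => z.val.property, ?_⟩
  rw [← hs₀, ρ.app_map_apply, ρ.app_map_apply, ← hw, ← M.map_comp_apply,
    ← M.map_comp_apply]
  rfl

theorem ctxEval_map {M : OMonad} (Y : OAlg M) {B : Pos} (g : PHom B Y.A.addBox)
    (w : (M.obj B).car) (x : Y.A.car) :
    ctxEval M Y ((M.map g).f w) x = Y.pi.f ((M.map ((substHom M Y x).comp g)).f w) := by
  rw [ctxEval, M.map_comp_apply]

section SynLe

variable {M : OMonad} {Y : OAlg M} {K : Set Y.A.car}

theorem synLe_refl (a : Y.A.car) : synLe M Y K a a := fun _ => id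

theorem synLe_trans {a b c : Y.A.car} (hab : synLe M Y K a b) (hbc : synLe M Y K b c) :
    synLe M Y K a c :=
  fun p hp => hbc p (hab p hp)

theorem pi_map_update_mem {ι : Type} [DecidableEq ι] (c : ι → Y.A.car) (j : ι)
    {x y : Y.A.car} (hxy : synLe M Y K x y) (w : (M.obj (Pos.discrete ι)).car)
    (h : Y.pi.f ((M.map (PHom.ofDiscrete (Function.update c j x))).f w) ∈ K) :
    Y.pi.f ((M.map (PHom.ofDiscrete (Function.update c j y))).f w) ∈ K := by
  let hole : PHom (Pos.discrete ι) Y.A.addBox :=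
    PHom.ofDiscrete (Function.update (Sum.inl ∘ c) j (Sum.inr ()))
  have hfill : ∀ z, PHom.ofDiscrete (Function.update c j z) = (substHom M Y z).comp hole := by
    intro z
    ext (i : ι)
    change Function.update c j z i
      = Sum.elim id (fun _ => z) (Function.update (Sum.inl ∘ c) j _ i)
    rw [Function.update_apply, Function.update_apply]
    split_ifs <;> rfl
  rw [hfill, ← ctxEval_map] at h ⊢
  exact hxy _ h

theorem pi_map_mem_of_forall_synLe {ι : Type} [Finite ι] {a b : ι → Y.A.car}
    (hab : ∀ i, synLe M Y K (a i) (b i)) (w : (M.obj (Pos.discrete ι)).car)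
    (h : Y.pi.f ((M.map (PHom.ofDiscrete a)).f w) ∈ K) :
    Y.pi.f ((M.map (PHom.ofDiscrete b)).f w) ∈ K := by
  classical
  cases nonempty_fintype ι
  suffices ∀ G : Finset ι, Y.pi.f ((M.map (PHom.ofDiscrete (G.piecewise b a))).f w) ∈ K by
    simpa using this Finset.univ
  intro G
  induction G using Finset.induction_on with
  | empty => simpa using h
  | insert j G hj ih =>
    rw [Finset.piecewise_insert]
    rw [← Function.update_eq_self j (G.piecewise b a),
      Finset.piecewise_eq_of_notMem _ _ _ hj] at ih
    exact pi_map_update_mem _ j (hab j) w ih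

end SynLe

/-- Membership in `K` survives replacing the arguments of an operation of `Y` by
`≼_K`-larger ones. -/
def SynLeStable (M : OMonad) (Y : OAlg M) (K : Set Y.A.car) : Prop :=
  ∀ V : (M.obj (relPos Y.A (synLe M Y K))).car,
    Y.pi.f ((M.map (relFst Y.A (synLe M Y K))).f V) ∈ K →
      Y.pi.f ((M.map (relSnd Y.A (synLe M Y K))).f V) ∈ K

section Stable

variable {M : OMonad} {Y : OAlg M}

/-- `φ × φ` sends an operation on `≼_K`-pairs into the subalgebra of `X × X` generated by
their images, where density and finitariness turn it into a term in finitely many such pairs. -/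
theorem synLeStable_preimage {M₀ : OMonad} {ρ : OMonadHom M₀ M} {C : Set (OAlg M)}
    (hdense : DenseOver ρ C) (hfin : FinitaryM M₀) (hsurj : PreservesSurj M)
    {X : OAlg M} (hXX : X.prod X ∈ C) (φ : OAlgHom Y X) (P : Set X.A.car) :
    SynLeStable M Y (φ.h.f ⁻¹' P) := by
  intro V hV
  let R := relPos Y.A (synLe M Y (φ.h.f ⁻¹' P))
  let ψ : PHom R (X.A.prod X.A) :=
    (φ.h.comp (relFst Y.A _)).pair (φ.h.comp (relSnd Y.A _))
  let Φ : PHom R ((X.prod X).A.sub (Set.range ψ.f)) :=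
    ⟨fun v => ⟨ψ.f v, v, rfl⟩, ψ.mono⟩
  obtain ⟨ι, _, g, w, hg, hw⟩ :=
    hdense.exists_finite_discrete_term hfin hsurj hXX _ ((M.map Φ).f V)
  choose v hv using hg
  let a : ι → Y.A.car := fun i => (relFst Y.A _).f (v i)
  let b : ι → Y.A.car := fun i => (relSnd Y.A _).f (v i)
  have hgab : PHom.ofDiscrete g
      = (φ.h.comp (PHom.ofDiscrete a)).pair (φ.h.comp (PHom.ofDiscrete b)) := by
    ext i
    exact (hv i).symm
  have hψ : ψ = (subIncl _ _).comp Φ := rfl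
  rw [hgab, ← M.map_comp_apply, ← hψ, X.prod_pi_map_pair, X.prod_pi_map_pair] at hw
  simp only [OAlgHom.pi_map_comp] at hw
  obtain ⟨hwa, hwb⟩ := Prod.mk.inj hw
  have ha : Y.pi.f ((M.map (PHom.ofDiscrete a)).f w) ∈ φ.h.f ⁻¹' P := by
    change φ.h.f _ ∈ P
    rw [hwa]
    exact hV
  have hb : Y.pi.f ((M.map (PHom.ofDiscrete b)).f w) ∈ φ.h.f ⁻¹' P :=
    pi_map_mem_of_forall_synLe (fun i => (v i).property) w ha
  change φ.h.f _ ∈ P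
  rw [← hwb]
  exact hb

def ctxLift (Y : OAlg M) {r : Y.A.car → Y.A.car → Prop} (hr : ∀ a, r a a)
    (V : (M.obj (relPos Y.A r)).car) : PHom Y.A.addBox (M.obj (relPos Y.A r)) :=
  ⟨Sum.elim (fun a => (M.sing _).f (⟨(a, a), hr a⟩ : (relPos Y.A r).car)) fun _ => V, by
    intro _ _ h
    cases h with
    | inl h => exact (M.sing _).mono ⟨h, h⟩
    | inr => exact le_rfl⟩

theorem pi_map_flat_ctxLift {r : Y.A.car → Y.A.car → Prop} (hr : ∀ a, r a a)
    (V : (M.obj (relPos Y.A r)).car) (lr : PHom (relPos Y.A r) Y.A)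
    (hlr : ∀ a, lr.f (⟨(a, a), hr a⟩ : (relPos Y.A r).car) = a) (p : (M.obj Y.A.addBox).car) :
    Y.pi.f ((M.map lr).f ((M.flat _).f ((M.map (ctxLift Y hr V)).f p)))
      = ctxEval M Y p (Y.pi.f ((M.map lr).f V)) := by
  have hsubst : (Y.pi.comp (M.map lr)).comp (ctxLift Y hr V)
      = substHom M Y (Y.pi.f ((M.map lr).f V)) := by
    ext (a | _)
    · exact (congrArg Y.pi.f (M.map_sing_apply lr _)).trans ((Y.pi_sing_apply _).trans (hlr a))
    · rfl
  rw [M.map_flat_apply, ← Y.pi_map_pi_apply, ← M.map_comp_apply, ← M.map_comp_apply, hsubst]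
  rfl

variable {K : Set Y.A.car}

theorem synLe_pi_map_relFst_relSnd (hK : SynLeStable M Y K)
    (V : (M.obj (relPos Y.A (synLe M Y K))).car) :
    synLe M Y K (Y.pi.f ((M.map (relFst Y.A (synLe M Y K))).f V))
      (Y.pi.f ((M.map (relSnd Y.A (synLe M Y K))).f V)) := by
  intro p hp
  rw [← pi_map_flat_ctxLift synLe_refl V _ fun _ => rfl] at hp ⊢
  exact hK _ hp

theorem synLe_pi_map_of_forall_synLe (hK : SynLeStable M Y K) {B : Pos} (f g : PHom B Y.A)
    (hfg : ∀ b, synLe M Y K (f.f b) (g.f b)) (v : (M.obj B).car) :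
    synLe M Y K (Y.pi.f ((M.map f).f v)) (Y.pi.f ((M.map g).f v)) := by
  let fg : PHom B (relPos Y.A (synLe M Y K)) :=
    ⟨fun b => ⟨(f.f b, g.f b), hfg b⟩, fun _ _ h => ⟨f.mono h, g.mono h⟩⟩
  have h := synLe_pi_map_relFst_relSnd hK ((M.map fg).f v)
  rw [← M.map_comp_apply, ← M.map_comp_apply] at h
  exact h

def synPreCong (hY : TrivOrder Y.A) (K : Set Y.A.car) : PreCong Y.A :=
  ⟨synLe M Y K, synLe_refl, fun _ _ _ => synLe_trans, fun a b h => hY a b h ▸ synLe_refl a⟩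

/-- Compare `x` and `y` through `τ = out ∘ [-]`: it is `≼_K`-equivalent to the identity,
monotone because `Y` is discrete, and `M τ` factors through `M [-]`. -/
theorem synLe_pi_of_map_quotHom_eq (hY : TrivOrder Y.A) (hinj : PreservesInj M)
    (hK : SynLeStable M Y K) {x y : (M.obj Y.A).car}
    (hxy : (M.map (quotHom (synPreCong hY K))).f x = (M.map (quotHom (synPreCong hY K))).f y) :
    synLe M Y K (Y.pi.f x) (Y.pi.f y) := by
  set co := synPreCong hY K
  let toDisc : PHom Y.A (Pos.discrete (quotPos co).car) :=
    PHom.ofTrivOrder hY (Quotient.mk co.setoid)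
  let τ : PHom Y.A Y.A := (PHom.ofDiscrete (α := (quotPos co).car) Quotient.out).comp toDisc
  have hτ : (M.map τ).f x = (M.map τ).f y := by
    rw [show τ = (PHom.ofDiscrete (α := (quotPos co).car) Quotient.out).comp toDisc from rfl]
    have hq : quotHom co = (PHom.ofDiscrete (B := quotPos co) id).comp toDisc := rfl
    rw [hq, M.map_comp_apply, M.map_comp_apply] at hxy
    rw [M.map_comp_apply, M.map_comp_apply, hinj _ Function.injective_id hxy]
  have hx := synLe_pi_map_of_forall_synLe hK (PHom.id _) τ
    (fun a => (Quotient.mk_out (s := co.setoid) a).2) x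
  have hy := synLe_pi_map_of_forall_synLe hK τ (PHom.id _)
    (fun a => (Quotient.mk_out (s := co.setoid) a).1) y
  rw [M.map_id_apply] at hx hy
  rw [hτ] at hx
  exact synLe_trans hx hy

theorem isCongOrdP_synPreCong (hY : TrivOrder Y.A) (hinj : PreservesInj M)
    (hsurj : PreservesSurj M) (hstd : UsesStdOrder M) (hK : SynLeStable M Y K) :
    IsCongOrdP M Y (synPreCong hY K) := by
  intro s t hst
  set co := synPreCong hY K
  obtain ⟨u, hus, hut⟩ := (hstd _ _ _).mp hst
  let qq : PHom (relPos Y.A (synLe M Y K)) (relPos (quotPos co) (· ≤ ·)) :=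
    ⟨fun v => ⟨((quotHom co).f v.val.1, (quotHom co).f v.val.2), v.property⟩,
      fun _ _ h => ⟨(quotHom co).mono h.1, (quotHom co).mono h.2⟩⟩
  have hqq : Function.Surjective qq.f := by
    rintro ⟨⟨a, b⟩, hab⟩
    rw [← Quotient.out_eq a, ← Quotient.out_eq b] at hab
    exact ⟨⟨(a.out, b.out), hab⟩,
      Subtype.ext (Prod.ext (Quotient.out_eq a) (Quotient.out_eq b))⟩
  obtain ⟨V, rfl⟩ := hsurj qq hqq u
  have hfst : (M.map (quotHom co)).f ((M.map (relFst _ _)).f V)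
      = (M.map (relFst _ _)).f ((M.map qq).f V) := by
    rw [← M.map_comp_apply, ← M.map_comp_apply]
    rfl
  have hsnd : (M.map (quotHom co)).f ((M.map (relSnd _ _)).f V)
      = (M.map (relSnd _ _)).f ((M.map qq).f V) := by
    rw [← M.map_comp_apply, ← M.map_comp_apply]
    rfl
  exact synLe_trans (synLe_pi_of_map_quotHom_eq hY hinj hK (hus.symm.trans hfst.symm))
    (synLe_trans (synLe_pi_map_relFst_relSnd hK V)
      (synLe_pi_of_map_quotHom_eq hY hinj hK (hsnd.trans hut)))

end Stable

section Transversal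

variable {M : OMonad} {Y X : OAlg M}

theorem synLe_preimage_of_apply_eq (φ : OAlgHom Y X) (P : Set X.A.car) {a b : Y.A.car}
    (hab : φ.h.f a = φ.h.f b) : synLe M Y (φ.h.f ⁻¹' P) a b := by
  intro p hp
  have hsubst : φ.h.comp (substHom M Y a) = φ.h.comp (substHom M Y b) := by
    ext (_ | _)
    · rfl
    · exact hab
  change φ.h.f _ ∈ P at hp ⊢
  rw [ctxEval, ← φ.pi_map_comp, ← hsubst, φ.pi_map_comp]
  exact hp

theorem exists_finite_synLe_transversal [Finite X.A.car] (φ : OAlgHom Y X) (P : Set X.A.car) :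
    ∃ T : Set Y.A.car, T.Finite ∧
      ∀ s, ∃ t ∈ T, synLe M Y (φ.h.f ⁻¹' P) s t ∧ synLe M Y (φ.h.f ⁻¹' P) t s := by
  refine ⟨Set.range (Set.rangeSplitting φ.h.f), Set.finite_range _,
    fun s => ⟨_, ⟨⟨φ.h.f s, s, rfl⟩, rfl⟩, ?_⟩⟩
  have h := Set.apply_rangeSplitting φ.h.f ⟨φ.h.f s, s, rfl⟩
  exact ⟨synLe_preimage_of_apply_eq φ P h.symm, synLe_preimage_of_apply_eq φ P h⟩

end Transversal

theorem essentially_finitary_syntactic_algebra_general (M : OMonad) (hM : Convention M)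
    (C : Set (OAlg M)) (M₀ : OMonad) (ρ : OMonadHom M₀ M) (hfin : FinitaryM M₀)
    (hdense : DenseOver ρ {P | InProdClosure M C P})
    (Sg : Pos) (htriv : TrivOrder Sg)
    (K : Set ((M.obj Sg).car))
    (X : OAlg M) (hX : X ∈ C) (φ : OAlgHom (M.free Sg) X) (hrec : Recognises φ K) :
    IsCongruenceOrdering M (M.free Sg) (synLe M (M.free Sg) K) ∧
    (FinitaryAlg M X → ∃ T : Set ((M.obj Sg).car), T.Finite ∧
      ∀ s, ∃ t ∈ T, synLe M (M.free Sg) K s t ∧ synLe M (M.free Sg) K t s) := by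
  obtain ⟨hinj, hsurj, -, -, hstd⟩ := hM
  obtain ⟨P, -, rfl⟩ := hrec
  have hY : TrivOrder (M.free Sg).A := OMonad.trivOrder_obj hstd htriv
  have hXX : InProdClosure M C (X.prod X) :=
    .prod X X _ (.base X hX) (.base X hX) (X.isBinProd_prod X)
  have hK := synLeStable_preimage hdense hfin hsurj hXX φ P
  refine ⟨⟨_, _, _, isCongOrdP_synPreCong hY hinj hsurj hstd hK⟩, fun hXfin => ?_⟩
  have := hXfin.1
  exact exists_finite_synLe_transversal φ P

/-- Existence of syntactic algebras for essentially finitary monads.  Suppose `M` is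
essentially finitary over the class `C`: there is a morphism of monads `ρ : M₀ ⇒ M`
with `M₀` finitary which is dense over the closure of `C` under binary products.
If a language `K ⊆ M Σ` is recognised by a morphism `φ : M Σ → X` with `X ∈ C`, then
`≼_K` is a congruence ordering on `M Σ`; in particular, when `X` is finitary, `≼_K`
has finitary index (so `K` has a syntactic algebra). -/
theorem essentially_finitary_syntactic_algebra (M : OMonad) (hM : Convention M)
    (C : Set (OAlg M)) (M₀ : OMonad) (ρ : OMonadHom M₀ M) (hfin : FinitaryM M₀)
    (hdense : DenseOver ρ {P | InProdClosure M C P})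
    (Sg : Pos) (hfinSg : Finite Sg.car) (htriv : TrivOrder Sg)
    (K : Set ((M.obj Sg).car))
    (X : OAlg M) (hX : X ∈ C) (φ : OAlgHom (M.free Sg) X) (hrec : Recognises φ K) :
    IsCongruenceOrdering M (M.free Sg) (synLe M (M.free Sg) K) ∧
    (FinitaryAlg M X → ∃ T : Set ((M.obj Sg).car), T.Finite ∧
      ∀ s, ∃ t ∈ T, synLe M (M.free Sg) K s t ∧ synLe M (M.free Sg) K t s) :=
  essentially_finitary_syntactic_algebra_general M hM C M₀ ρ hfin hdense Sg htriv K X hX φ hrec
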